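/- arXiv:2306.04967 — 2 statements merged into one kernel-verified Lean document; each statement's English description precedes it below -/
import Mathlib

section
/- Let (L|K,v) be a finite extension of valued fields such that the residue field extension Lv|Kv is separable of degree [Lv : Kv] = [L : K]. Then there exists x ∈ L with vx = 0 such that Lv = Kv(xv) and O_L = O_K[x], and moreover Ω_{O_L|O_K} = 0. -/
open scoped TensorProduct

set_option maxHeartbeats 1000000
set_option synthInstance.maxHeartbeats 400000

noncomputable section

namespace VP

universe u

variable {Γ : Type*} [LinearOrderedCommGroupWithZero Γ]

/-! ### Ordered abelian group notions (multiplicative, inside `Γˣ`) -/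

/-- `H` is a convex subgroup of the ordered abelian group `S`. -/
def ConvexIn (S H : Subgroup Γˣ) : Prop :=
  H ≤ S ∧ ∀ a ∈ H, ∀ b ∈ S, 1 ≤ b → b ≤ a → b ∈ H

/-- the element `γ : Γ` is (the coercion of) a member of `H`. -/
def MemVal (H : Subgroup Γˣ) (γ : Γ) : Prop := ∃ u ∈ H, (u : Γ) = γ

/-- The smallest convex subgroup of `S` containing (the element of `S` with value) `γ`. -/
def smallestConvexIn (S : Subgroup Γˣ) (γ : Γ) : Subgroup Γˣ :=
  sInf {H | ConvexIn S H ∧ MemVal H γ}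

/-- The largest convex subgroup of `S` not containing `γ`. -/
def largestConvexAvoiding (S : Subgroup Γˣ) (γ : Γ) : Subgroup Γˣ :=
  sSup {H | ConvexIn S H ∧ ¬ MemVal H γ}

/-- The archimedean component of `S` at `γ`, i.e. the quotient of the smallest convex
subgroup containing `γ` by the largest convex subgroup avoiding `γ`, is a discretely
ordered group, i.e. has a smallest element `> 1`. -/
def ArchComponentDiscrete (S : Subgroup Γˣ) (γ : Γ) : Prop :=
  ∃ a ∈ smallestConvexIn S γ, 1 < a ∧ a ∉ largestConvexAvoiding S γ ∧
    ∀ b ∈ smallestConvexIn S γ, 1 < b → b ∉ largestConvexAvoiding S γ →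
      ∃ h ∈ largestConvexAvoiding S γ, a ≤ b * h

/-! ### Value groups, valuation rings, residue fields -/

/-- The value group of a valuation on a field, as a subgroup of `Γˣ`. -/
def valueGroup {L : Type*} [Field L] (v : Valuation L Γ) : Subgroup Γˣ :=
  MonoidHom.range (Units.map (v.toMonoidWithZeroHom.toMonoidHom))

section homs

variable {A B C : Type*} [Field A] [Field B] [Field C]

/-- The inclusion of valuation rings induced by a field embedding. -/
def extHom (f : A →+* B) (v : Valuation B Γ) :
    (v.comap f).valuationSubring →+* v.valuationSubring where
  toFun x := ⟨f x.1, x.2⟩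
  map_one' := Subtype.ext (map_one f)
  map_mul' x y := Subtype.ext (map_mul f x.1 y.1)
  map_zero' := Subtype.ext (map_zero f)
  map_add' x y := Subtype.ext (map_add f x.1 y.1)

/-- The inclusion of valuation rings in an intermediate stage of a tower. -/
def towerHom (g : A →+* B) (h : B →+* C) (f : A →+* C) (hf : h.comp g = f)
    (v : Valuation C Γ) :
    (v.comap f).valuationSubring →+* (v.comap h).valuationSubring where
  toFun x := ⟨g x.1, by subst hf; exact x.2⟩
  map_one' := Subtype.ext (map_one g)
  map_mul' x y := Subtype.ext (map_mul g x.1 y.1)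
  map_zero' := Subtype.ext (map_zero g)
  map_add' x y := Subtype.ext (map_add g x.1 y.1)

theorem one_of_mul_eq_one {x y : Γ} (hx : x ≤ 1) (hy : y ≤ 1) (hxy : x * y = 1) :
    x = 1 := by
  rcases lt_or_eq_of_le hx with hx' | hx'
  · exfalso
    have : x * y < 1 := by
      calc x * y ≤ x * 1 := by
            exact mul_le_mul_right hy x
        _ = x := mul_one x
        _ < 1 := hx'
    rw [hxy] at this
    exact lt_irrefl _ this
  · exact hx'

/-- A ring homomorphism between valuation rings which is compatible with the valuations
is a local homomorphism. -/
theorem isLocalHom_of_map_val {u : Valuation A Γ} {w : Valuation B Γ}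
    (φ : u.valuationSubring →+* w.valuationSubring)
    (hφ : ∀ x : u.valuationSubring, w (φ x : B) = u (x : A)) :
    IsLocalHom φ := by
  constructor
  intro a ha
  rcases ha with ⟨uu, huu⟩
  have hprod : ((uu : w.valuationSubring) : B) * (((uu⁻¹ : _) : w.valuationSubring) : B) = 1 := by
    norm_cast
    rw [mul_inv_cancel]
    rfl
  have h1 : w ((φ a : B)) = 1 := by
    apply one_of_mul_eq_one (x := w ((φ a : B))) (y := w (((uu⁻¹ : _) : w.valuationSubring) : B))
    · exact (φ a).2
    · exact ((uu⁻¹ : _) : w.valuationSubring).2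
    · rw [← map_mul]
      rw [huu] at hprod
      rw [hprod, map_one]
  have hu1 : u (a : A) = 1 := by rw [← hφ a, h1]
  have hane : (a : A) ≠ 0 := by
    intro h0
    rw [h0, map_zero] at hu1
    exact zero_ne_one hu1
  have hinv : ((a : A)⁻¹) ∈ u.valuationSubring := by
    rw [Valuation.mem_valuationSubring_iff, map_inv₀, hu1, inv_one]
  refine IsUnit.of_mul_eq_one (a := a) ⟨(a : A)⁻¹, hinv⟩ ?_
  exact Subtype.ext (mul_inv_cancel₀ hane)

theorem extHom_val (f : A →+* B) (v : Valuation B Γ) (x : (v.comap f).valuationSubring) :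
    v ((extHom f v x : B)) = (v.comap f) (x : A) := rfl

theorem towerHom_val (g : A →+* B) (h : B →+* C) (f : A →+* C) (hf : h.comp g = f)
    (v : Valuation C Γ) (x : (v.comap f).valuationSubring) :
    (v.comap h) ((towerHom g h f hf v x : B)) = (v.comap f) (x : A) := by
  subst hf
  rfl

instance extHom_isLocalHom (f : A →+* B) (v : Valuation B Γ) : IsLocalHom (extHom f v) :=
  isLocalHom_of_map_val (extHom f v) (extHom_val f v)

instance towerHom_isLocalHom (g : A →+* B) (h : B →+* C) (f : A →+* C) (hf : h.comp g = f)
    (v : Valuation C Γ) : IsLocalHom (towerHom g h f hf v) :=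
  isLocalHom_of_map_val (towerHom g h f hf v) (towerHom_val g h f hf v)

/-- The algebra structure on the valuation ring of `v` over the valuation ring of the
restriction of `v`. -/
def extAlgebra (f : A →+* B) (v : Valuation B Γ) :
    Algebra (v.comap f).valuationSubring v.valuationSubring :=
  (extHom f v).toAlgebra

/-- The algebra structure between valuation rings of restrictions in a tower. -/
def towerAlgebra (g : A →+* B) (h : B →+* C) (f : A →+* C) (hf : h.comp g = f)
    (v : Valuation C Γ) :
    Algebra (v.comap f).valuationSubring (v.comap h).valuationSubring :=
  (towerHom g h f hf v).toAlgebra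

/-- The induced map between residue fields. -/
def extResMap (f : A →+* B) (v : Valuation B Γ) :
    IsLocalRing.ResidueField (v.comap f).valuationSubring →+*
      IsLocalRing.ResidueField v.valuationSubring :=
  IsLocalRing.ResidueField.map (extHom f v)

/-- The residue field of the extension as an algebra over the residue field of the base. -/
def extResAlgebra (f : A →+* B) (v : Valuation B Γ) :
    Algebra (IsLocalRing.ResidueField (v.comap f).valuationSubring)
      (IsLocalRing.ResidueField v.valuationSubring) :=
  (extResMap f v).toAlgebra

/-- The induced map between residue fields in a tower. -/
def towerResMap (g : A →+* B) (h : B →+* C) (f : A →+* C) (hf : h.comp g = f)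
    (v : Valuation C Γ) :
    IsLocalRing.ResidueField (v.comap f).valuationSubring →+*
      IsLocalRing.ResidueField (v.comap h).valuationSubring :=
  IsLocalRing.ResidueField.map (towerHom g h f hf v)

def towerResAlgebra (g : A →+* B) (h : B →+* C) (f : A →+* C) (hf : h.comp g = f)
    (v : Valuation C Γ) :
    Algebra (IsLocalRing.ResidueField (v.comap f).valuationSubring)
      (IsLocalRing.ResidueField (v.comap h).valuationSubring) :=
  (towerResMap g h f hf v).toAlgebra

end homs

section ext

variable (K : Type*) {L : Type*} [Field K] [Field L] [Algebra K L]

/-- The extension of valued fields `(L|K,v)` is unibranched: the restriction of `v` to `K`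
has a unique extension to `L` up to equivalence (phrased via valuation subrings of `L`
lying over the valuation subring of the restriction of `v` to `K`). -/
def IsUnibranched (v : Valuation L Γ) : Prop :=
  ∀ O : ValuationSubring L,
    (∀ x : K, algebraMap K L x ∈ O ↔ v (algebraMap K L x) ≤ 1) → O = v.valuationSubring

/-- The ramification index `e(L|K,v) = (vL : vK)`. -/
def ramificationIndex (v : Valuation L Γ) : ℕ :=
  (valueGroup (v.comap (algebraMap K L))).relIndex (valueGroup v)

/-- The residue degree `f(L|K,v) = [Lv : Kv]`. -/
def residueDegree (v : Valuation L Γ) : ℕ :=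
  letI := extResAlgebra (algebraMap K L) v
  Module.finrank (IsLocalRing.ResidueField (v.comap (algebraMap K L)).valuationSubring)
    (IsLocalRing.ResidueField v.valuationSubring)

/-- `(L|K,v)` is defectless: `[L:K] = e(L|K,v) ⬝ f(L|K,v)`. -/
def IsDefectless (v : Valuation L Γ) : Prop :=
  Module.finrank K L = ramificationIndex K v * residueDegree K v

/-- The subring `𝒪_K[x]` of `L` generated by the valuation ring of `v|_K` and `x : L`. -/
def adjoinRing (v : Valuation L Γ) (x : L) : Subring L :=
  Subring.closure
    ((((v.comap (algebraMap K L)).valuationSubring.toSubring.map (algebraMap K L)) : Set L) ∪ {x})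

/-- `vL = vK + ℤ ⬝ vx`; i.e. the value of `x` generates the value group extension. -/
def GeneratesValueGroup (v : Valuation L Γ) (x : L) : Prop :=
  ∀ y : L, y ≠ 0 → ∃ (c : K) (n : ℤ), c ≠ 0 ∧ v y = v (algebraMap K L c) * (v x) ^ n

/-- `θ` is an Artin-Schreier generator of `L|K` (for degree `p`):
`L = K(θ)` and `θ^p - θ ∈ K`. -/
def IsASGenerator (p : ℕ) (θ : L) : Prop :=
  IntermediateField.adjoin K {θ} = ⊤ ∧ θ ^ p - θ ∈ (algebraMap K L).range

/-- `η` is a Kummer generator of `L|K` (of degree `q`): `L = K(η)` and `η^q ∈ K`. -/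
def IsKummerGenerator (q : ℕ) (η : L) : Prop :=
  IntermediateField.adjoin K {η} = ⊤ ∧ η ^ q ∈ (algebraMap K L).range

/-- `σ` belongs to the inertia group of `(L|K,v)`: it lies in the decomposition group
(`v ∘ σ` is equivalent to `v`) and `v (σ x - x) > 0` (additively) for all `x ∈ 𝒪_L`. -/
def InInertia (v : Valuation L Γ) (σ : L ≃ₐ[K] L) : Prop :=
  (v.comap σ.toAlgHom.toRingHom).IsEquiv v ∧ ∀ x : L, v x ≤ 1 → v (σ x - x) < 1

/-- The inertia field of `(L|K,v)`: the fixed field of the inertia group. -/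
def inertiaField (v : Valuation L Γ) : IntermediateField K L where
  carrier := {x | ∀ σ : L ≃ₐ[K] L, InInertia K v σ → σ x = x}
  mul_mem' := fun {a b} ha hb σ hσ => by rw [map_mul, ha σ hσ, hb σ hσ]
  one_mem' := fun σ _ => map_one σ
  add_mem' := fun {a b} ha hb σ hσ => by rw [map_add, ha σ hσ, hb σ hσ]
  zero_mem' := fun σ _ => map_zero σ
  algebraMap_mem' := fun r σ _ => σ.commutes r
  inv_mem' := fun x hx σ hσ => by rw [map_inv₀, hx σ hσ]

end ext


section extinst

variable {A B : Type*} [Field A] [Field B] [Algebra A B]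

/-- The valuation ring of `v` is an algebra over the valuation ring of its restriction. -/
instance extAlgebraI (v : Valuation B Γ) :
    Algebra (v.comap (algebraMap A B)).valuationSubring v.valuationSubring :=
  extAlgebra (algebraMap A B) v

/-- The residue field of `v` is an algebra over the residue field of its restriction. -/
instance extResAlgebraI (v : Valuation B Γ) :
    Algebra (IsLocalRing.ResidueField (v.comap (algebraMap A B)).valuationSubring)
      (IsLocalRing.ResidueField v.valuationSubring) :=
  extResAlgebra (algebraMap A B) v

end extinst

section inter

variable {K L : Type*} [Field K] [Field L] [Algebra K L] (v : Valuation L Γ)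

instance interBaseAlgebra (E : IntermediateField K L) :
    Algebra (v.comap (algebraMap K L)).valuationSubring
      (v.comap (algebraMap E L)).valuationSubring :=
  towerAlgebra (algebraMap K E) (algebraMap E L) (algebraMap K L)
    (IsScalarTower.algebraMap_eq K E L).symm v

instance interBaseResAlgebra (E : IntermediateField K L) :
    Algebra (IsLocalRing.ResidueField (v.comap (algebraMap K L)).valuationSubring)
      (IsLocalRing.ResidueField (v.comap (algebraMap E L)).valuationSubring) :=
  towerResAlgebra (algebraMap K E) (algebraMap E L) (algebraMap K L)
    (IsScalarTower.algebraMap_eq K E L).symm v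

/-- The algebra structure between the valuation rings of restrictions of `v` along a
step `E ≤ E'` of intermediate fields. -/
def stepAlgebra {E E' : IntermediateField K L} (h : E ≤ E') :
    Algebra (v.comap (algebraMap E L)).valuationSubring
      (v.comap (algebraMap E' L)).valuationSubring :=
  towerAlgebra (IntermediateField.inclusion h).toRingHom (algebraMap E' L) (algebraMap E L)
    (RingHom.ext fun _ => rfl) v

/-- The corresponding algebra structure between residue fields. -/
def stepResAlgebra {E E' : IntermediateField K L} (h : E ≤ E') :
    Algebra (IsLocalRing.ResidueField (v.comap (algebraMap E L)).valuationSubring)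
      (IsLocalRing.ResidueField (v.comap (algebraMap E' L)).valuationSubring) :=
  towerResAlgebra (IntermediateField.inclusion h).toRingHom (algebraMap E' L) (algebraMap E L)
    (RingHom.ext fun _ => rfl) v

def stepScalarTower {E E' : IntermediateField K L} (h : E ≤ E') :
    letI := stepAlgebra v h
    IsScalarTower (v.comap (algebraMap K L)).valuationSubring
      (v.comap (algebraMap E L)).valuationSubring
      (v.comap (algebraMap E' L)).valuationSubring := by
  letI := stepAlgebra v h
  refine IsScalarTower.of_algebraMap_eq fun x => ?_
  rfl

end inter

section tower3

variable {K L M : Type*} [Field K] [Field L] [Field M] [Algebra K L] [Algebra L M]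
  [Algebra K M] [IsScalarTower K L M] (v : Valuation M Γ)

instance midAlgebra :
    Algebra (v.comap (algebraMap K M)).valuationSubring
      (v.comap (algebraMap L M)).valuationSubring :=
  towerAlgebra (algebraMap K L) (algebraMap L M) (algebraMap K M)
    (IsScalarTower.algebraMap_eq K L M).symm v

instance rings3ScalarTower :
    IsScalarTower (v.comap (algebraMap K M)).valuationSubring
      (v.comap (algebraMap L M)).valuationSubring v.valuationSubring :=
  IsScalarTower.of_algebraMap_eq fun x =>
    Subtype.ext (IsScalarTower.algebraMap_apply K L M (x : K))

end tower3

/-- `(K,v)` is henselian: every algebraic field extension of `K` admits a unique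
extension of `v` up to equivalence (phrased via valuation subrings lying over the
valuation ring of `v`). -/
def IsHenselianValued {K : Type u} [Field K] (v : Valuation K Γ) : Prop :=
  ∀ (L : Type u) [Field L] [Algebra K L], Algebra.IsAlgebraic K L →
    ∃! O : ValuationSubring L, ∀ x : K, algebraMap K L x ∈ O ↔ v x ≤ 1


/-- `B|A` is a tower of finite Galois extensions. -/
def IsGaloisTower (A B : Type*) [Field A] [Field B] [Algebra A B] : Prop :=
  ∃ (n : ℕ) (ch : Fin (n + 1) → IntermediateField A B),
    ch 0 = ⊥ ∧ ch (Fin.last n) = ⊤ ∧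
    ∀ i : Fin n, ∃ h : ch i.castSucc ≤ ch i.succ,
      letI : Algebra (ch i.castSucc) (ch i.succ) :=
        (IntermediateField.inclusion h).toRingHom.toAlgebra
      letI : Module (ch i.castSucc) (ch i.succ) := Algebra.toModule
      IsGalois (ch i.castSucc) (ch i.succ) ∧ FiniteDimensional (ch i.castSucc) (ch i.succ)

section dr

variable {K : Type*} [Field K]

/-- Condition (DRvg): for convex subgroups `Γ₁ ⊊ Γ₂` of the value group `vK`, the
quotient `Γ₂/Γ₁` is not isomorphic to `ℤ`. -/
def DRvg (v : Valuation K Γ) : Prop :=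
  ∀ H₁ H₂ : Subgroup Γˣ, ConvexIn (valueGroup v) H₁ → ConvexIn (valueGroup v) H₂ →
    H₁ < H₂ → IsEmpty ((↥H₂ ⧸ H₁.subgroupOf H₂) ≃* Multiplicative ℤ)

/-- Condition (DRvr): if the residue characteristic is `p > 0`, then the `p`-power map on
`𝒪_{K̂}/p𝒪_{K̂}` is surjective, where `𝒪_{K̂}` is the valuation ring of the completion. -/
def DRvr (v : Valuation K Γ) : Prop :=
  ∀ p : ℕ, p.Prime → CharP (IsLocalRing.ResidueField v.valuationSubring) p →
    letI : Valued K Γ := Valued.mk' v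
    Function.Surjective
      (fun x : (Valued.extensionValuation (K := K) (Γ₀ := Γ)).integer ⧸
          (Ideal.span {(p : (Valued.extensionValuation (K := K) (Γ₀ := Γ)).integer)}) => x ^ p)

/-- `(K,v)` is a deeply ramified field: conditions (DRvg) and (DRvr) hold. -/
def IsDeeplyRamified (v : Valuation K Γ) : Prop := DRvg v ∧ DRvr v

/-- `(K,v)` is nontrivially valued. -/
def IsNontriviallyValued (v : Valuation K Γ) : Prop := ∃ x : K, x ≠ 0 ∧ v x ≠ 1

end dr

end VP
open VP IsLocalRing

universe u v

/-!
Lift a primitive element `ξ ≠ 0` of `Lv|Kv` to `x ∈ 𝒪_L`. Since `1, ξ, …, ξⁿ⁻¹` are linearly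
independent over `Kv`, the powers of `x` are valuation independent over `K`:
`v (∑ cᵢ xⁱ) = maxᵢ v cᵢ`. For `n = [L : K]` they form a `K`-basis of `L`, and valuation
independence puts the coordinates of every element of `𝒪_L` into `𝒪_K`, so `𝒪_L = 𝒪_K[x]`.
Lifting the minimal polynomial of `ξ` and correcting the lift by a polynomial with coefficients in
the maximal ideal of `𝒪_K` gives `P ∈ 𝒪_K[X]` with `P(x) = 0` and `P'(x)` a unit, as `ξ` is
separable. Then `0 = d(P(x)) = P'(x) dx`, so `dx = 0` and `Ω_{𝒪_L|𝒪_K} = 0`.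
-/

open Polynomial

theorem KaehlerDifferential.subsingleton_of_adjoin_singleton_eq_top {R S : Type*} [CommRing R]
    [CommRing S] [Algebra R S] {x : S} (hx : Algebra.adjoin R {x} = ⊤) {P : R[X]}
    (hP : aeval x P = 0) (hP' : IsUnit (aeval x (derivative P))) :
    Subsingleton Ω[S⁄R] := by
  have hDx : KaehlerDifferential.D R S x = 0 := by
    have h := (KaehlerDifferential.D R S).map_aeval P x
    rw [hP, map_zero, eq_comm] at h
    exact hP'.smul_eq_zero.mp h
  have hD : KaehlerDifferential.D R S = 0 :=
    Derivation.ext_of_adjoin_eq_top {x} hx fun y hy => by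
      rw [Set.mem_singleton_iff.mp hy, hDx, Derivation.zero_apply]
  refine subsingleton_of_forall_eq 0 fun ω => ?_
  have : ω ∈ Submodule.span S (Set.range (KaehlerDifferential.D R S)) := by
    rw [KaehlerDifferential.span_range_derivation]
    trivial
  simpa [hD] using this

theorem Algebra.adjoin_singleton_eq_top_of_span_pow_eq_top {R A : Type*} [CommSemiring R]
    [Semiring A] [Algebra R A] {x : A} {n : ℕ}
    (h : Submodule.span R (Set.range fun i : Fin n => x ^ (i : ℕ)) = ⊤) :
    Algebra.adjoin R {x} = ⊤ := by
  refine toSubmodule_eq_top.mp (_root_.eq_top_iff.mpr ?_)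
  rw [← h, Submodule.span_le]
  rintro _ ⟨i, rfl⟩
  exact Subalgebra.pow_mem _ (Algebra.self_mem_adjoin_singleton R x) _

theorem Field.exists_primitive_element_ne_zero (F E : Type*) [Field F] [Field E] [Algebra F E]
    [FiniteDimensional F E] [Algebra.IsSeparable F E] :
    ∃ α : E, α ≠ 0 ∧ IntermediateField.adjoin F {α} = ⊤ := by
  obtain ⟨α, hα⟩ := Field.exists_primitive_element F E
  by_cases h0 : α = 0
  · subst h0
    refine ⟨1, one_ne_zero, ?_⟩
    rw [IntermediateField.adjoin_one, ← hα, IntermediateField.adjoin_zero]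
  · exact ⟨α, h0, hα⟩

namespace Valuation

theorem residue_ne_zero_iff_eq_one {F Γ₀ : Type*} [Field F] [LinearOrderedCommGroupWithZero Γ₀]
    (w : Valuation F Γ₀) (z : w.valuationSubring) :
    residue w.valuationSubring z ≠ 0 ↔ w z = 1 :=
  (residue_ne_zero_iff_isUnit z).trans (integer.integers w).isUnit_iff_valuation_eq_one

section ValuedExtension

variable {K L Γ₀ : Type*} [Field K] [Field L] [Algebra K L] [LinearOrderedCommGroupWithZero Γ₀]
  (v : Valuation L Γ₀)

theorem residue_smul (a : (v.comap (algebraMap K L)).valuationSubring) (y : v.valuationSubring) :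
    residue v.valuationSubring (a • y) = residue _ a • residue v.valuationSubring y := by
  rw [Algebra.smul_def, Algebra.smul_def, _root_.map_mul]
  rfl

theorem coe_smul_valuationSubring (a : (v.comap (algebraMap K L)).valuationSubring)
    (y : v.valuationSubring) : ((a • y : v.valuationSubring) : L) = (a : K) • (y : L) := by
  rw [Algebra.smul_def, Algebra.smul_def]
  rfl

theorem residue_aeval (x : v.valuationSubring)
    (G : (v.comap (algebraMap K L)).valuationSubring[X]) :
    residue v.valuationSubring (aeval x G) =
      aeval (residue v.valuationSubring x) (G.map (residue _)) :=
  map_aeval_eq_aeval_map (ψ := residue _) (φ := residue _) rfl G x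

variable {v} {ι : Type*} [Fintype ι] {b : ι → v.valuationSubring}

theorem val_sum_smul_eq_one_of_linearIndependent_residue
    (hb : LinearIndependent (ResidueField (v.comap (algebraMap K L)).valuationSubring)
      (fun i => residue v.valuationSubring (b i)))
    {a : ι → (v.comap (algebraMap K L)).valuationSubring} {m : ι} (ha : residue _ (a m) ≠ 0) :
    v (∑ i, a i • b i : v.valuationSubring) = 1 := by
  rw [← residue_ne_zero_iff_eq_one, map_sum]
  simp only [residue_smul]
  exact fun h => ha (Fintype.linearIndependent_iff.mp hb _ h m)

theorem val_le_val_sum_of_linearIndependent_residue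
    (hb : LinearIndependent (ResidueField (v.comap (algebraMap K L)).valuationSubring)
      (fun i => residue v.valuationSubring (b i)))
    (c : ι → K) (j : ι) :
    v.comap (algebraMap K L) (c j) ≤ v (∑ i, c i • (b i : L)) := by
  classical
  obtain ⟨m, -, hm⟩ := Finset.exists_max_image Finset.univ
    (fun i => v.comap (algebraMap K L) (c i)) ⟨j, Finset.mem_univ j⟩
  by_cases hcm : c m = 0
  · have hcj := hm j (Finset.mem_univ j)
    rw [hcm, _root_.map_zero, le_zero_iff] at hcj
    exact hcj ▸ zero_le
  have hd : ∀ i, c i / c m ∈ (v.comap (algebraMap K L)).valuationSubring := fun i => by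
    rw [mem_valuationSubring_iff, map_div₀]
    exact div_le_one_of_le₀ (hm i (Finset.mem_univ i)) zero_le
  let d : ι → (v.comap (algebraMap K L)).valuationSubring := fun i => ⟨c i / c m, hd i⟩
  have hdm : residue _ (d m) ≠ 0 := by
    rw [show d m = 1 from Subtype.ext (div_self hcm), _root_.map_one]
    exact one_ne_zero
  have hsum : ∑ i, c i • (b i : L) = c m • ((∑ i, d i • b i : v.valuationSubring) : L) := by
    simp only [AddSubmonoidClass.coe_finsetSum, coe_smul_valuationSubring, Finset.smul_sum,
      smul_smul, d]
    refine Finset.sum_congr rfl fun i _ => ?_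
    rw [mul_div_cancel₀ _ hcm]
  rw [hsum, Algebra.smul_def, _root_.map_mul,
    val_sum_smul_eq_one_of_linearIndependent_residue hb hdm, mul_one]
  exact hm j (Finset.mem_univ j)

theorem linearIndependent_of_linearIndependent_residue
    (hb : LinearIndependent (ResidueField (v.comap (algebraMap K L)).valuationSubring)
      (fun i => residue v.valuationSubring (b i))) :
    LinearIndependent K (fun i => (b i : L)) := by
  refine Fintype.linearIndependent_iff.mpr fun c hc j => ?_
  have := val_le_val_sum_of_linearIndependent_residue hb c j
  rwa [hc, _root_.map_zero, le_zero_iff, zero_iff] at this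

theorem span_eq_top_of_linearIndependent_residue [FiniteDimensional K L]
    (hb : LinearIndependent (ResidueField (v.comap (algebraMap K L)).valuationSubring)
      (fun i => residue v.valuationSubring (b i)))
    (hcard : Fintype.card ι = Module.finrank K L) :
    Submodule.span (v.comap (algebraMap K L)).valuationSubring (Set.range b) = ⊤ := by
  classical
  have : Nonempty ι := by
    rw [← Fintype.card_pos_iff, hcard]
    exact Module.finrank_pos
  let B := basisOfLinearIndependentOfCardEqFinrank
    (linearIndependent_of_linearIndependent_residue hb) hcard
  refine eq_top_iff.mpr fun y _ => Submodule.mem_span_range_iff_exists_fun _ |>.mpr ?_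
  have hy : ∑ i, B.repr y i • (b i : L) = y := by
    simpa [B] using B.sum_repr (y : L)
  have hc : ∀ i, B.repr y i ∈ (v.comap (algebraMap K L)).valuationSubring := fun i =>
    (val_le_val_sum_of_linearIndependent_residue hb _ i).trans (hy.symm ▸ y.2)
  exact ⟨fun i => ⟨B.repr y i, hc i⟩, Subtype.ext <| by
    simpa only [AddSubmonoidClass.coe_finsetSum, coe_smul_valuationSubring] using hy⟩

theorem toSubring_eq_adjoinRing_of_adjoin_eq_top {x : v.valuationSubring}
    (hx : Algebra.adjoin (v.comap (algebraMap K L)).valuationSubring {x} = ⊤) :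
    v.valuationSubring.toSubring = adjoinRing K v (x : L) := by
  refine le_antisymm (fun y hy => ?_) (Subring.closure_le.mpr ?_)
  · suffices ∀ z ∈ Algebra.adjoin (v.comap (algebraMap K L)).valuationSubring {x},
        (z : L) ∈ adjoinRing K v (x : L) from this ⟨y, hy⟩ (hx ▸ trivial)
    intro z hz
    induction hz using Algebra.adjoin_induction with
    | mem z hz => exact Subring.subset_closure (Or.inr (by rw [Set.mem_singleton_iff.mp hz]; rfl))
    | algebraMap a => exact Subring.subset_closure (Or.inl ⟨a, a.2, rfl⟩)
    | add _ _ _ _ h₁ h₂ => exact add_mem h₁ h₂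
    | mul _ _ _ _ h₁ h₂ => exact mul_mem h₁ h₂
  · rintro _ (⟨a, ha, rfl⟩ | rfl)
    exacts [ha, x.2]

theorem exists_aeval_eq_zero_isUnit_aeval_derivative {n : ℕ} {x : v.valuationSubring}
    (hspan : Submodule.span (v.comap (algebraMap K L)).valuationSubring
      (Set.range fun i : Fin n => x ^ (i : ℕ)) = ⊤)
    (hli : LinearIndependent (ResidueField (v.comap (algebraMap K L)).valuationSubring)
      (fun i : Fin n => residue v.valuationSubring (x ^ (i : ℕ))))
    (hsep : IsSeparable (ResidueField (v.comap (algebraMap K L)).valuationSubring)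
      (residue v.valuationSubring x)) :
    ∃ P : (v.comap (algebraMap K L)).valuationSubring[X],
      aeval x P = 0 ∧ IsUnit (aeval x (derivative P)) := by
  set μ := minpoly (ResidueField (v.comap (algebraMap K L)).valuationSubring)
    (residue v.valuationSubring x)
  obtain ⟨G, hGμ, -, -⟩ := lifts_and_natDegree_eq_and_monic
    (lifts_iff_coeff_lifts μ |>.mpr fun _ => residue_surjective _) (minpoly.monic hsep.isIntegral)
  obtain ⟨a, ha⟩ := Submodule.mem_span_range_iff_exists_fun _ |>.mp
    (hspan ▸ Submodule.mem_top : aeval x G ∈ _)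
  -- `G(x)` has residue `μ(xv) = 0`, so the coefficients `a i` lie in the maximal ideal
  have ha0 : ∀ i, residue _ (a i) = 0 := by
    refine Fintype.linearIndependent_iff.mp hli _ ?_
    simp only [← residue_smul, ← map_sum, ha, residue_aeval, hGμ]
    exact minpoly.aeval _ _
  let Q := ∑ i : Fin n, C (a i) * X ^ (i : ℕ)
  have hQx : aeval x Q = aeval x G := by
    simp [Q, ← ha, Algebra.smul_def]
  have hQμ : (G - Q).map (residue _) = μ := by
    simp [Q, Polynomial.map_sub, Polynomial.map_sum, hGμ, ha0]
  refine ⟨G - Q, by rw [_root_.map_sub, hQx, sub_self], (residue_ne_zero_iff_isUnit _).mp ?_⟩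
  rw [residue_aeval, ← derivative_map, hQμ]
  exact hsep.aeval_derivative_ne_zero (minpoly.aeval _ _)

end ValuedExtension

end Valuation

/-- a finite extension of valued fields whose residue field extension is
separable of degree `[Lv : Kv] = [L : K]` satisfies `𝒪_L = 𝒪_K[x]` for some `x` with
`vx = 0` and `Lv = Kv(xv)`, and `Ω_{𝒪_L|𝒪_K} = 0`. -/
theorem statement_9 {K L : Type u} [Field K] [Field L] [Algebra K L]
    {Γ : Type v} [LinearOrderedCommGroupWithZero Γ] (v : Valuation L Γ)
    [FiniteDimensional K L]
    (hsep : Algebra.IsSeparable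
      (ResidueField (v.comap (algebraMap K L)).valuationSubring)
      (ResidueField v.valuationSubring))
    (hdeg : residueDegree K v = Module.finrank K L) :
    ∃ x : v.valuationSubring, v (x : L) = 1 ∧
      Algebra.adjoin (ResidueField (v.comap (algebraMap K L)).valuationSubring)
        {IsLocalRing.residue _ x} = ⊤ ∧
      v.valuationSubring.toSubring = adjoinRing K v (x : L) ∧
      Subsingleton (KaehlerDifferential
        (v.comap (algebraMap K L)).valuationSubring v.valuationSubring) := by
  have hfr : Module.finrank (ResidueField (v.comap (algebraMap K L)).valuationSubring)
      (ResidueField v.valuationSubring) = Module.finrank K L := hdeg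
  have : FiniteDimensional (ResidueField (v.comap (algebraMap K L)).valuationSubring)
      (ResidueField v.valuationSubring) := Module.finite_of_finrank_pos (hfr ▸ Module.finrank_pos)
  obtain ⟨ξ, hξ0, hξ⟩ := Field.exists_primitive_element_ne_zero
    (ResidueField (v.comap (algebraMap K L)).valuationSubring) (ResidueField v.valuationSubring)
  obtain ⟨x, rfl⟩ := residue_surjective ξ
  have hxsep := hsep.isSeparable' (residue _ x)
  have hint := hxsep.isIntegral
  have hli : LinearIndependent (ResidueField (v.comap (algebraMap K L)).valuationSubring)
      fun i : Fin (Module.finrank K L) => residue _ (x ^ (i : ℕ)) := by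
    rw [← hfr, ← IntermediateField.finrank_top', ← hξ, IntermediateField.adjoin.finrank hint]
    simpa only [map_pow] using linearIndependent_pow (residue _ x)
  have hspan := Valuation.span_eq_top_of_linearIndependent_residue hli (Fintype.card_fin _)
  have hadj := Algebra.adjoin_singleton_eq_top_of_span_pow_eq_top hspan
  obtain ⟨P, hP, hP'⟩ := Valuation.exists_aeval_eq_zero_isUnit_aeval_derivative hspan hli hxsep
  refine ⟨x, (v.residue_ne_zero_iff_eq_one x).mp hξ0, ?_,
    Valuation.toSubring_eq_adjoinRing_of_adjoin_eq_top hadj,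
    KaehlerDifferential.subsingleton_of_adjoin_singleton_eq_top hadj hP hP'⟩
  rw [← IntermediateField.adjoin_simple_toSubalgebra_of_isAlgebraic hint.isAlgebraic, hξ,
    IntermediateField.top_toSubalgebra]
end
end

section
/- Let (L|K,v) be a Kummer extension of valued fields of prime degree q with Kummer generator η, and let ζ_q ∈ K be a primitive q-th root of unity. If (L|K,v) is unibranched, then for all c ∈ K one has v(η − c) ≤ v(η·(1 − ζ_q)). -/
open scoped TensorProduct

set_option maxHeartbeats 1000000
set_option synthInstance.maxHeartbeats 400000

noncomputable section

open VP IsLocalRing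

universe u v

/-! Some `τ ∈ Gal(L|K)` sends `η` to `ζ η`. Since `(L|K,v)` is unibranched, `v ∘ τ` is
equivalent to `v`; as `τ` has finite order, the values `v (τ^k x)` move monotonically along a
closed orbit, so `v ∘ τ = v`. Hence `(ζ - 1) η = τ (η - c) - (η - c)` has value at most
`v (η - c)` by the ultrametric inequality. -/

theorem Valuation.map_apply_eq_of_isEquiv_comap {R Γ₀ : Type*} [Ring R]
    [LinearOrderedCommGroupWithZero Γ₀] (v : Valuation R Γ₀) {f : R →+* R}
    (hf : (v.comap f).IsEquiv v) {n : ℕ} (hn : 0 < n) {x : R}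
    (hx : Function.IsPeriodicPt f n x) : v (f x) = v x := by
  have hiter : ∀ k r s, v (f^[k] r) ≤ v (f^[k] s) ↔ v r ≤ v s := by
    intro k
    induction k with
    | zero => simp
    | succ k ih =>
      intro r s
      rw [Function.iterate_succ_apply, Function.iterate_succ_apply, ih]
      exact hf r s
  have h1 : f^[1] x = f x := rfl
  have hxn : f^[n] x = x := hx
  rcases le_total (v (f x)) (v x) with hle | hle
  · have hanti : Antitone fun k => v (f^[k] x) := antitone_nat_of_succ_le fun k => by
      simpa only [Function.iterate_succ_apply] using (hiter k _ _).2 hle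
    refine le_antisymm hle ?_
    simpa only [hxn, h1] using hanti hn
  · have hmono : Monotone fun k => v (f^[k] x) := monotone_nat_of_le_succ fun k => by
      simpa only [Function.iterate_succ_apply] using (hiter k _ _).2 hle
    refine le_antisymm ?_ hle
    simpa only [hxn, h1] using hmono hn

namespace VP

variable {K L Γ : Type*} [Field K] [Field L] [Algebra K L] [LinearOrderedCommGroupWithZero Γ]
  {v : Valuation L Γ}

theorem IsUnibranched.isEquiv_comap (huni : IsUnibranched K v) (τ : L ≃ₐ[K] L) :
    (v.comap (τ : L →+* L)).IsEquiv v := by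
  refine (Valuation.isEquiv_iff_valuationSubring _ _).2 (huni _ fun x => ?_)
  simp only [Valuation.mem_valuationSubring_iff, Valuation.comap_apply, RingHom.coe_coe,
    AlgEquiv.commutes]

theorem IsUnibranched.map_algEquiv_apply [FiniteDimensional K L] (huni : IsUnibranched K v)
    (τ : L ≃ₐ[K] L) (x : L) : v (τ x) = v x := by
  have hτ : IsOfFinOrder τ := isOfFinOrder_of_finite τ
  refine v.map_apply_eq_of_isEquiv_comap (huni.isEquiv_comap τ) hτ.orderOf_pos ?_
  show (⇑τ)^[orderOf τ] x = x
  rw [← AlgEquiv.coe_pow, pow_orderOf_eq_one, AlgEquiv.one_apply]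

end VP

open Module IntermediateField in
theorem exists_algEquiv_apply_eq_mul_of_adjoin_eq_top {K L : Type*} [Field K] [Field L]
    [Algebra K L] [FiniteDimensional K L] {η : L} (hη : K⟮η⟯ = ⊤) {a : K}
    (ha : η ^ finrank K L = algebraMap K L a) {ζ : K} (hζ : IsPrimitiveRoot ζ (finrank K L)) :
    ∃ τ : L ≃ₐ[K] L, τ η = algebraMap K L ζ * η := by
  have H := irreducible_X_pow_sub_C_of_root_adjoin_eq_top ha hη
  have hK : (primitiveRoots (finrank K L) K).Nonempty :=
    ⟨ζ, (mem_primitiveRoots finrank_pos).2 hζ⟩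
  have := isSplittingField_X_pow_sub_C_of_root_adjoin_eq_top hK ha hη
  have : NeZero (finrank K L) := ⟨finrank_pos.ne'⟩
  refine ⟨(autEquivZmod H L hζ).symm (Multiplicative.ofAdd ((1 : ℕ) : ZMod _)), ?_⟩
  rw [autEquivZmod_symm_apply_natCast H L ha hζ 1, pow_one, Algebra.smul_def]

theorem statement_16_general {K L : Type u} [Field K] [Field L] [Algebra K L]
    {Γ : Type v} [LinearOrderedCommGroupWithZero Γ] (v : Valuation L Γ)
    (q : ℕ) (hq : q.Prime) (hdeg : Module.finrank K L = q)
    (ζ : K) (hζ : IsPrimitiveRoot ζ q)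
    (η : L) (hη : IsKummerGenerator K q η)
    (huni : IsUnibranched K v) :
    ∀ c : K, v (η * algebraMap K L (1 - ζ)) ≤ v (η - algebraMap K L c) := by
  intro c
  obtain ⟨hadj, a, ha⟩ := hη
  have : FiniteDimensional K L := Module.finite_of_finrank_pos (hdeg ▸ hq.pos)
  obtain ⟨τ, hτ⟩ := exists_algEquiv_apply_eq_mul_of_adjoin_eq_top hadj
    (by rw [hdeg, ha]) (hdeg ▸ hζ)
  set γ := η - algebraMap K L c
  have hmove : τ γ - γ = -(η * algebraMap K L (1 - ζ)) := by
    rw [map_sub, hτ, AlgEquiv.commutes, map_sub, map_one]; ring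
  calc v (η * algebraMap K L (1 - ζ)) = v (τ γ - γ) := by rw [hmove, Valuation.map_neg]
    _ ≤ max (v (τ γ)) (v γ) := v.map_sub _ _
    _ = v γ := by rw [huni.map_algEquiv_apply, max_self]

/-- in a unibranched Kummer extension of prime degree `q` with Kummer
generator `η` and `ζ_q ∈ K` a primitive `q`-th root of unity, for all `c ∈ K` one has
`v(η - c) ≤ v(η(1 - ζ_q))` (additively; multiplicatively the displayed inequality). -/
theorem statement_16 {K L : Type u} [Field K] [Field L] [Algebra K L]
    {Γ : Type v} [LinearOrderedCommGroupWithZero Γ] (v : Valuation L Γ)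
    (q : ℕ) (hq : q.Prime) [IsGalois K L] (hdeg : Module.finrank K L = q)
    (hchar : ringChar K ≠ q) (ζ : K) (hζ : IsPrimitiveRoot ζ q)
    (η : L) (hη : IsKummerGenerator K q η)
    (huni : IsUnibranched K v) :
    ∀ c : K, v (η * algebraMap K L (1 - ζ)) ≤ v (η - algebraMap K L c) :=
  statement_16_general v q hq hdeg ζ hζ η hη huni
end
end
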